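/- Let Φ be an ortho-additive range-contractive map on a von Neumann algebra M, and let V be a partial isometry in M with initial projection P = V*V and final projection Q = VV* satisfying PQ = 0. Then for every A ∈ M and every B ∈ PMP, Φ(VBA) = VB·Φ(A). In particular, Φ(VA) = V·Φ(A) for every A ∈ M. -/

import Mathlib

noncomputable section

namespace Stmt10

variable {H : Type*} [NormedAddCommGroup H] [InnerProductSpace ℂ H] [CompleteSpace H]

/-- The range projection of a bounded operator: the orthogonal projection of `H` onto the
closure of the range of `A` (equivalently, the smallest projection `P` with `P * A = A`). -/
noncomputable def rangeProjection (A : H →L[ℂ] H) : H →L[ℂ] H :=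
  haveI : CompleteSpace ((LinearMap.range (A : H →ₗ[ℂ] H)).topologicalClosure : Submodule ℂ H) :=
    (Submodule.isClosed_topologicalClosure _).completeSpace_coe
  (LinearMap.range (A : H →ₗ[ℂ] H)).topologicalClosure.subtypeL ∘L
    Submodule.orthogonalProjectionOnto (LinearMap.range (A : H →ₗ[ℂ] H)).topologicalClosure

/-- The order on projections: `P ≤ Q` iff `P * Q = P`. -/
def projLE (P Q : H →L[ℂ] H) : Prop := P * Q = P

/-- `Φ` is an ortho-additive map on `M`: it is additive on pairs of orthogonal elements. -/
def OrthoAdditive (M : VonNeumannAlgebra H) (Φ : (H →L[ℂ] H) → (H →L[ℂ] H)) : Prop :=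
  ∀ A ∈ M, ∀ B ∈ M, star A * B = 0 → Φ (A + B) = Φ A + Φ B

/-- `Φ` is a range-contractive map on `M`: `R(Φ A) ≤ R(A)` for all `A ∈ M`. -/
def RangeContractive (M : VonNeumannAlgebra H) (Φ : (H →L[ℂ] H) → (H →L[ℂ] H)) : Prop :=
  ∀ A ∈ M, projLE (rangeProjection (Φ A)) (rangeProjection A)

/-! The proof works with `Q = V V*` and `W = V B`, which satisfy `Q W = W` and `W Q = 0`. For `A`
with `Q A = 0`, the elements `A` and `W A` are orthogonal, and `Q - W` annihilates `A + W A`;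
range contractivity transfers both facts to `Φ`, and expanding gives `Φ (W A) = W Φ A`. A general
`A` is split orthogonally as `Q A + (1 - Q) A`, and `W` kills the first summand on both sides. -/

theorem _root_.mul_star_mul_self_of_isIdempotentElem {E : Type*} [NonUnitalNormedRing E]
    [StarRing E] [CStarRing E] {V : E} (h : IsIdempotentElem (star V * V)) :
    V * (star V * V) = V := by
  rw [← sub_eq_zero, ← CStarRing.star_mul_self_eq_zero_iff]
  have h' : star V * V * star V * V = star V * V := by rw [mul_assoc (star V * V), h.eq]
  simp only [star_sub, star_mul, star_star, sub_mul, mul_sub, ← mul_assoc, h']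
  abel

theorem _root_.IsIdempotentElem.mul_eq_of_mul_mul_eq {R : Type*} [Semigroup R] {p b : R}
    (hp : IsIdempotentElem p) (hb : p * b * p = b) : b * p = b := by
  rw [← hb, mul_assoc, hp.eq]

theorem isSelfAdjoint_rangeProjection (A : H →L[ℂ] H) : IsSelfAdjoint (rangeProjection A) :=
  isSelfAdjoint_starProjection _

theorem rangeProjection_mul_self (A : H →L[ℂ] H) : rangeProjection A * A = A := by
  ext x
  exact Submodule.starProjection_eq_self_iff.2
    (Submodule.le_topologicalClosure _ (LinearMap.mem_range_self _ x))

theorem mul_rangeProjection_eq_zero {D A : H →L[ℂ] H} (h : D * A = 0) :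
    D * rangeProjection A = 0 := by
  have hker : (LinearMap.range (A : H →ₗ[ℂ] H)).topologicalClosure ≤
      LinearMap.ker (D : H →ₗ[ℂ] H) := by
    refine Submodule.topologicalClosure_minimal _ ?_ (ContinuousLinearMap.isClosed_ker D)
    rintro _ ⟨x, rfl⟩
    exact congr($h x)
  ext x
  exact hker (Submodule.starProjection_apply_mem _ x)

theorem mul_eq_zero_of_projLE {D A B : H →L[ℂ] H} (hDA : D * A = 0)
    (h : projLE (rangeProjection B) (rangeProjection A)) : D * B = 0 := by
  have h' : rangeProjection A * rangeProjection B = rangeProjection B := by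
    simpa only [star_mul, (isSelfAdjoint_rangeProjection _).star_eq] using congr(star $h)
  have hB : rangeProjection A * B = B := by
    conv_rhs => rw [← rangeProjection_mul_self B, ← h', mul_assoc, rangeProjection_mul_self]
  rw [← hB, ← mul_assoc, mul_rangeProjection_eq_zero hDA, zero_mul]

variable {M : VonNeumannAlgebra H} {Φ : (H →L[ℂ] H) → (H →L[ℂ] H)}

theorem RangeContractive.mul_map_eq_zero (hrc : RangeContractive M Φ) {D A : H →L[ℂ] H}
    (hA : A ∈ M) (hDA : D * A = 0) : D * Φ A = 0 :=
  mul_eq_zero_of_projLE hDA (hrc A hA)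

theorem RangeContractive.mul_map_eq_map (hrc : RangeContractive M Φ) {P A : H →L[ℂ] H}
    (hA : A ∈ M) (hPA : P * A = A) : P * Φ A = Φ A := by
  have := hrc.mul_map_eq_zero (D := 1 - P) hA (by rw [sub_mul, one_mul, hPA, sub_self])
  rwa [sub_mul, one_mul, sub_eq_zero, eq_comm] at this

theorem map_mul_eq_mul_map_of_mul_eq_zero (hadd : OrthoAdditive M Φ)
    (hrc : RangeContractive M Φ) {Q W A : H →L[ℂ] H} (hQ : IsSelfAdjoint Q) (hW : W ∈ M)
    (hQW : Q * W = W) (hWQ : W * Q = 0) (hA : A ∈ M) (hQA : Q * A = 0) :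
    Φ (W * A) = W * Φ A := by
  have hWA : W * A ∈ M := mul_mem hW hA
  have horth : star A * (W * A) = 0 := by
    rw [← hQW, ← mul_assoc, ← mul_assoc, ← hQ.star_eq, ← star_mul, hQA, star_zero,
      zero_mul, zero_mul]
  have hsplit : Φ (A + W * A) = Φ A + Φ (W * A) := hadd A hA _ hWA horth
  have hQΦA : Q * Φ A = 0 := hrc.mul_map_eq_zero hA hQA
  have hQΦWA : Q * Φ (W * A) = Φ (W * A) := hrc.mul_map_eq_map hWA (by rw [← mul_assoc, hQW])
  have hkill : (Q - W) * (A + W * A) = 0 := by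
    have hWW : W * W = 0 := by nth_rw 2 [← hQW]; rw [← mul_assoc, hWQ, zero_mul]
    rw [sub_mul, mul_add, mul_add, hQA, ← mul_assoc, hQW, ← mul_assoc, hWW, zero_mul]
    abel
  have hQΦ : Q * Φ (A + W * A) = W * Φ (A + W * A) := by
    have := hrc.mul_map_eq_zero (add_mem hA hWA) hkill
    rwa [sub_mul, sub_eq_zero] at this
  calc Φ (W * A) = Q * Φ (A + W * A) := by rw [hsplit, mul_add, hQΦA, zero_add, hQΦWA]
    _ = W * Φ (A + W * A) := hQΦ
    _ = W * Φ A := by rw [hsplit, mul_add, ← hQΦWA, ← mul_assoc, hWQ, zero_mul, add_zero]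

theorem map_mul_eq_mul_map (hadd : OrthoAdditive M Φ) (hrc : RangeContractive M Φ)
    {Q W A : H →L[ℂ] H} (hQ : IsStarProjection Q) (hQM : Q ∈ M) (hW : W ∈ M)
    (hQW : Q * W = W) (hWQ : W * Q = 0) (hA : A ∈ M) :
    Φ (W * A) = W * Φ A := by
  have hQA : Q * A ∈ M := mul_mem hQM hA
  have hQ'A : (1 - Q) * A ∈ M := mul_mem (sub_mem (one_mem M) hQM) hA
  have horth : star (Q * A) * ((1 - Q) * A) = 0 := by
    rw [star_mul, hQ.isSelfAdjoint.star_eq, mul_assoc, ← mul_assoc Q, hQ.mul_one_sub_self,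
      zero_mul, mul_zero]
  have hsplit : Φ A = Φ (Q * A) + Φ ((1 - Q) * A) := by
    rw [← hadd _ hQA _ hQ'A horth, ← add_mul, add_sub_cancel, one_mul]
  have hWQ' : W * (1 - Q) = W := by rw [mul_sub, mul_one, hWQ, sub_zero]
  have hWΦQA : W * Φ (Q * A) = 0 := by
    rw [← hrc.mul_map_eq_map hQA (by rw [← mul_assoc, hQ.isIdempotentElem.eq]), ← mul_assoc,
      hWQ, zero_mul]
  calc Φ (W * A) = Φ (W * ((1 - Q) * A)) := by rw [← mul_assoc, hWQ']
    _ = W * Φ ((1 - Q) * A) :=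
        map_mul_eq_mul_map_of_mul_eq_zero hadd hrc hQ.isSelfAdjoint hW hQW hWQ hQ'A
          (by rw [← mul_assoc, hQ.mul_one_sub_self, zero_mul])
    _ = W * Φ A := by rw [hsplit, mul_add, hWΦQA, zero_add]

theorem stmt10_general (M : VonNeumannAlgebra H)
    (Φ : (H →L[ℂ] H) → (H →L[ℂ] H))
    (hadd : OrthoAdditive M Φ)
    (hrc : RangeContractive M Φ)
    (V : H →L[ℂ] H) (hV : V ∈ M)
    (hVpi : (star V * V) * (star V * V) = star V * V)
    (hPQ : (star V * V) * (V * star V) = 0) :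
    (∀ A ∈ M, ∀ B ∈ M, (star V * V) * B * (star V * V) = B →
      Φ (V * B * A) = V * B * Φ A) ∧
    (∀ A ∈ M, Φ (V * A) = V * Φ A) := by
  have hVPV : V * (star V * V) = V := mul_star_mul_self_of_isIdempotentElem hVpi
  have hQ : IsStarProjection (V * star V) :=
    ⟨by rw [IsIdempotentElem, ← mul_assoc, mul_assoc V, hVPV], .mul_star_self V⟩
  have hQM : V * star V ∈ M := mul_mem hV (star_mem hV)
  have part1 : ∀ A ∈ M, ∀ B ∈ M, (star V * V) * B * (star V * V) = B →
      Φ (V * B * A) = V * B * Φ A := by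
    intro A hA B hBM hB
    refine map_mul_eq_mul_map hadd hrc hQ hQM (mul_mem hV hBM) ?_ ?_ hA
    · rw [← mul_assoc, mul_assoc V, hVPV]
    · rw [mul_assoc, ← IsIdempotentElem.mul_eq_of_mul_mul_eq hVpi hB, mul_assoc, hPQ, mul_zero,
        mul_zero]
  refine ⟨part1, fun A hA => ?_⟩
  simpa only [hVPV] using part1 A hA _ (mul_mem (star_mem hV) hV) (by rw [hVpi, hVpi])

/-- Let `Φ` be an ortho-additive range-contractive map on `M` and let
`V ∈ M` be a partial isometry with initial projection `P = V*V` and final projection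
`Q = VV*` satisfying `PQ = 0`. Then `Φ (V B A) = V B (Φ A)` for all `A ∈ M` and
`B ∈ PMP`; in particular `Φ (V A) = V (Φ A)` for all `A ∈ M`. -/
theorem stmt10 (M : VonNeumannAlgebra H)
    (Φ : (H →L[ℂ] H) → (H →L[ℂ] H))
    (hmaps : ∀ A ∈ M, Φ A ∈ M)
    (hadd : OrthoAdditive M Φ)
    (hrc : RangeContractive M Φ)
    (V : H →L[ℂ] H) (hV : V ∈ M)
    (hVpi : (star V * V) * (star V * V) = star V * V)
    (hPQ : (star V * V) * (V * star V) = 0) :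
    (∀ A ∈ M, ∀ B ∈ M, (star V * V) * B * (star V * V) = B →
      Φ (V * B * A) = V * B * Φ A) ∧
    (∀ A ∈ M, Φ (V * A) = V * Φ A) :=
  stmt10_general M Φ hadd hrc V hV hVpi hPQ

end Stmt10
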